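/- (Huber; Lemma 1(iii)) For every ε ∈ (0,1) and every measurable set A ⊆ Ψ, the range of the posterior probability of A over all ε-contaminations of the marginal prior satisfies δ(A) = Π(A|x) ε* (r(A^c) − r(A)) / ((1 + ε* r(A))(1 + ε* r(A^c))) + ε* r(A) / (1 + ε* r(A)). -/

import Mathlib

open MeasureTheory Set

variable {Ω : Type*} [MeasurableSpace Ω]

/-- The posterior probability of a set `A` when the prior is `μ` and the likelihood
(conditional prior predictive density `ψ ↦ m(x|ψ)`) is `f`. -/
noncomputable def postProb (f : Ω → ℝ) (μ : Measure Ω) (A : Set Ω) : ℝ :=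
  (∫ ψ in A, f ψ ∂μ) / (∫ ψ, f ψ ∂μ)

/-- The ε-contaminated prior `(1−ε)P + εQ`. -/
noncomputable def contam (P Q : Measure Ω) (ε : ℝ) : Measure Ω :=
  ENNReal.ofReal (1 - ε) • P + ENNReal.ofReal ε • Q

/-- `r(A) = sup_{ψ ∈ A} f(ψ) / m` (equal to `0` when `A = ∅` since `Real.sSup ∅ = 0`). -/
noncomputable def rSup (f : Ω → ℝ) (P : Measure Ω) (A : Set Ω) : ℝ :=
  sSup (f '' A) / ∫ ψ, f ψ ∂P

/-- The upper posterior probability over all ε-contaminations. -/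
noncomputable def upperPost (f : Ω → ℝ) (P : Measure Ω) (ε : ℝ) (A : Set Ω) : ℝ :=
  ⨆ Q : ProbabilityMeasure Ω, postProb f (contam P (Q : Measure Ω) ε) A


/-- The lower posterior probability over all ε-contaminations. -/
noncomputable def lowerPost (f : Ω → ℝ) (P : Measure Ω) (ε : ℝ) (A : Set Ω) : ℝ :=
  ⨅ Q : ProbabilityMeasure Ω, postProb f (contam P (Q : Measure Ω) ε) A

/-- `δ(A) = Π^{upper}(A|x) − Π^{lower}(A|x)`. -/
noncomputable def deltaPost (f : Ω → ℝ) (P : Measure Ω) (ε : ℝ) (A : Set Ω) : ℝ :=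
  upperPost f P ε A - lowerPost f P ε A

/-!
Against the contaminated prior `(1 - ε) P + ε Q` the posterior of `A` is
`((1 - ε) a + ε x) / ((1 - ε) m + ε (x + y))`, where `a = ∫_A f dP`, `m = ∫ f dP`,
`x = ∫_A f dQ ≤ sup_A f` and `y = ∫_{Aᶜ} f dQ ≤ sup_{Aᶜ} f`. This is increasing in `x` and
decreasing in `y`, so the supremum over `Q` is `((1 - ε) a + ε sup_A f) / ((1 - ε) m + ε sup_A f)`
and the infimum is `(1 - ε) a / ((1 - ε) m + ε sup_{Aᶜ} f)`; both are approached by point masses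
at points where `f` nearly attains its supremum on `A`, resp. `Aᶜ`. Dividing numerators and
denominators by `(1 - ε) m` and subtracting gives Huber's formula.
-/

lemma integrable_of_nonneg_of_bddAbove {f : Ω → ℝ} (hf : Measurable f) (hf0 : ∀ ψ, 0 ≤ f ψ)
    (hbdd : BddAbove (range f)) (μ : Measure Ω) [IsFiniteMeasure μ] : Integrable f μ := by
  obtain ⟨C, hC⟩ := hbdd
  refine .of_bound hf.aestronglyMeasurable C (ae_of_all _ fun ψ => ?_)
  rw [Real.norm_of_nonneg (hf0 ψ)]
  exact hC (mem_range_self ψ)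

lemma sSup_image_nonneg {α : Type*} {f : α → ℝ} (hf0 : ∀ x, 0 ≤ f x) (B : Set α) :
    0 ≤ sSup (f '' B) :=
  Real.sSup_nonneg (forall_mem_image.2 fun x _ => hf0 x)

lemma setIntegral_le_sSup_image {f : Ω → ℝ} (hf0 : ∀ ψ, 0 ≤ f ψ) {B : Set Ω}
    (hB : BddAbove (f '' B)) (μ : Measure Ω) [IsProbabilityMeasure μ] :
    ∫ ψ in B, f ψ ∂μ ≤ sSup (f '' B) := by
  calc ∫ ψ in B, f ψ ∂μ ≤ ‖∫ ψ in B, f ψ ∂μ‖ := Real.le_norm_self _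
    _ ≤ sSup (f '' B) * μ.real B := by
      refine norm_setIntegral_le_of_norm_le_const (measure_lt_top μ B) fun ψ hψ => ?_
      rw [Real.norm_of_nonneg (hf0 ψ)]
      exact le_csSup hB (mem_image_of_mem f hψ)
    _ ≤ sSup (f '' B) := mul_le_of_le_one_right (sSup_image_nonneg hf0 B) measureReal_le_one

lemma postProb_nonneg {f : Ω → ℝ} (hf0 : ∀ ψ, 0 ≤ f ψ) (μ : Measure Ω) (A : Set Ω) :
    0 ≤ postProb f μ A :=
  div_nonneg (integral_nonneg hf0) (integral_nonneg hf0)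

lemma postProb_le_one {f : Ω → ℝ} (hf0 : ∀ ψ, 0 ≤ f ψ) {μ : Measure Ω} (hμ : Integrable f μ)
    (A : Set Ω) : postProb f μ A ≤ 1 :=
  div_le_one_of_le₀ (setIntegral_le_integral hμ (ae_of_all _ hf0)) (integral_nonneg hf0)

lemma add_div_add_add_le {n d x y s : ℝ} (hn : 0 ≤ n) (hnd : n ≤ d) (hd : 0 < d) (hx : 0 ≤ x)
    (hy : 0 ≤ y) (hxs : x ≤ s) : (n + x) / (d + (x + y)) ≤ (n + s) / (d + s) := by
  rw [div_le_div_iff₀ (by linarith) (by linarith)]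
  nlinarith [mul_nonneg hn hy, mul_nonneg (sub_nonneg.2 hnd) (sub_nonneg.2 hxs),
    mul_nonneg hy (hx.trans hxs)]

lemma div_add_le_add_div_add_add {n d x y s : ℝ} (hn : 0 ≤ n) (hnd : n ≤ d) (hd : 0 < d)
    (hx : 0 ≤ x) (hy : 0 ≤ y) (hys : y ≤ s) : n / (d + s) ≤ (n + x) / (d + (x + y)) := by
  rw [div_le_div_iff₀ (by linarith) (by linarith)]
  nlinarith [mul_nonneg hn (sub_nonneg.2 hys), mul_nonneg hx (sub_nonneg.2 hnd),
    mul_nonneg hx (hy.trans hys)]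

section Contamination

variable {f : Ω → ℝ} {P Q : Measure Ω} {ε : ℝ} {A : Set Ω}

instance isFiniteMeasure_contam [IsFiniteMeasure P] [IsFiniteMeasure Q] :
    IsFiniteMeasure (contam P Q ε) := by
  have := P.smul_finite (c := ENNReal.ofReal (1 - ε)) ENNReal.ofReal_ne_top
  have := Q.smul_finite (c := ENNReal.ofReal ε) ENNReal.ofReal_ne_top
  unfold contam
  infer_instance

lemma contam_restrict :
    (contam P Q ε).restrict A = contam (P.restrict A) (Q.restrict A) ε := by
  simp only [contam, Measure.restrict_add, Measure.restrict_smul]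

lemma integral_contam (hP : Integrable f P) (hQ : Integrable f Q) (hε0 : 0 ≤ ε) (hε1 : ε ≤ 1) :
    ∫ ψ, f ψ ∂contam P Q ε = (1 - ε) * ∫ ψ, f ψ ∂P + ε * ∫ ψ, f ψ ∂Q := by
  rw [contam, integral_add_measure (hP.smul_measure ENNReal.ofReal_ne_top)
      (hQ.smul_measure ENNReal.ofReal_ne_top), integral_smul_measure, integral_smul_measure,
    ENNReal.toReal_ofReal (sub_nonneg.2 hε1), ENNReal.toReal_ofReal hε0, smul_eq_mul, smul_eq_mul]

lemma setIntegral_contam (hP : Integrable f P) (hQ : Integrable f Q) (hε0 : 0 ≤ ε)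
    (hε1 : ε ≤ 1) :
    ∫ ψ in A, f ψ ∂contam P Q ε = (1 - ε) * ∫ ψ in A, f ψ ∂P + ε * ∫ ψ in A, f ψ ∂Q := by
  rw [contam_restrict]
  exact integral_contam hP.restrict hQ.restrict hε0 hε1

lemma postProb_contam (hP : Integrable f P) (hQ : Integrable f Q) (hε0 : 0 ≤ ε) (hε1 : ε ≤ 1)
    (hA : MeasurableSet A) :
    postProb f (contam P Q ε) A =
      ((1 - ε) * ∫ ψ in A, f ψ ∂P + ε * ∫ ψ in A, f ψ ∂Q) /
        ((1 - ε) * ∫ ψ, f ψ ∂P + ε * ((∫ ψ in A, f ψ ∂Q) + ∫ ψ in Aᶜ, f ψ ∂Q)) := by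
  rw [postProb, setIntegral_contam hP hQ hε0 hε1, integral_contam hP hQ hε0 hε1,
    integral_add_compl hA hQ]

lemma postProb_contam_dirac (hf : Measurable f) (hP : Integrable f P) (hε0 : 0 ≤ ε)
    (hε1 : ε ≤ 1) (hA : MeasurableSet A) (ψ : Ω) :
    postProb f (contam P (Measure.dirac ψ) ε) A =
      ((1 - ε) * ∫ ψ in A, f ψ ∂P + ε * A.indicator f ψ) /
        ((1 - ε) * ∫ ψ, f ψ ∂P + ε * f ψ) := by
  classical
  have hδ : Integrable f (Measure.dirac ψ) :=
    integrable_dirac' hf.stronglyMeasurable enorm_lt_top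
  rw [postProb, setIntegral_contam hP hδ hε0 hε1, integral_contam hP hδ hε0 hε1,
    integral_dirac' f ψ hf.stronglyMeasurable, setIntegral_dirac' hf.stronglyMeasurable ψ hA,
    indicator_apply]

lemma postProb_contam_le (hf0 : ∀ ψ, 0 ≤ f ψ) (hP : Integrable f P) (hQ : Integrable f Q)
    [IsProbabilityMeasure Q] (hm : 0 < ∫ ψ, f ψ ∂P) (hε0 : 0 ≤ ε) (hε1 : ε < 1)
    (hA : MeasurableSet A) (hbdd : BddAbove (f '' A)) :
    postProb f (contam P Q ε) A ≤
      ((1 - ε) * ∫ ψ in A, f ψ ∂P + ε * sSup (f '' A)) /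
        ((1 - ε) * ∫ ψ, f ψ ∂P + ε * sSup (f '' A)) := by
  rw [postProb_contam hP hQ hε0 hε1.le hA, mul_add]
  exact add_div_add_add_le (mul_nonneg (sub_nonneg.2 hε1.le) (integral_nonneg hf0))
    (mul_le_mul_of_nonneg_left (setIntegral_le_integral hP (ae_of_all _ hf0))
      (sub_nonneg.2 hε1.le))
    (mul_pos (sub_pos.2 hε1) hm) (mul_nonneg hε0 (integral_nonneg hf0))
    (mul_nonneg hε0 (integral_nonneg hf0))
    (mul_le_mul_of_nonneg_left (setIntegral_le_sSup_image hf0 hbdd Q) hε0)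

lemma le_postProb_contam (hf0 : ∀ ψ, 0 ≤ f ψ) (hP : Integrable f P) (hQ : Integrable f Q)
    [IsProbabilityMeasure Q] (hm : 0 < ∫ ψ, f ψ ∂P) (hε0 : 0 ≤ ε) (hε1 : ε < 1)
    (hA : MeasurableSet A) (hbdd : BddAbove (f '' Aᶜ)) :
    (1 - ε) * (∫ ψ in A, f ψ ∂P) / ((1 - ε) * ∫ ψ, f ψ ∂P + ε * sSup (f '' Aᶜ)) ≤
      postProb f (contam P Q ε) A := by
  rw [postProb_contam hP hQ hε0 hε1.le hA, mul_add]
  exact div_add_le_add_div_add_add (mul_nonneg (sub_nonneg.2 hε1.le) (integral_nonneg hf0))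
    (mul_le_mul_of_nonneg_left (setIntegral_le_integral hP (ae_of_all _ hf0))
      (sub_nonneg.2 hε1.le))
    (mul_pos (sub_pos.2 hε1) hm) (mul_nonneg hε0 (integral_nonneg hf0))
    (mul_nonneg hε0 (integral_nonneg hf0))
    (mul_le_mul_of_nonneg_left (setIntegral_le_sSup_image hf0 hbdd Q) hε0)

lemma continuousOn_div_contam_denom {m : ℝ} (hm : 0 < m) (hε0 : 0 ≤ ε) (hε1 : ε < 1)
    {g : ℝ → ℝ} (hg : Continuous g) :
    ContinuousOn (fun t => g t / ((1 - ε) * m + ε * t)) (Ici 0) :=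
  hg.continuousOn.div (by fun_prop) fun t (ht : 0 ≤ t) =>
    (add_pos_of_pos_of_nonneg (mul_pos (sub_pos.2 hε1) hm) (mul_nonneg hε0 ht)).ne'

theorem upperPost_eq (hf : Measurable f) (hf0 : ∀ ψ, 0 ≤ f ψ) (hbdd : BddAbove (range f))
    [IsProbabilityMeasure P] (hm : 0 < ∫ ψ, f ψ ∂P) (hε0 : 0 ≤ ε) (hε1 : ε < 1)
    (hA : MeasurableSet A) :
    upperPost f P ε A = ((1 - ε) * ∫ ψ in A, f ψ ∂P + ε * sSup (f '' A)) /
        ((1 - ε) * ∫ ψ, f ψ ∂P + ε * sSup (f '' A)) := by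
  have hint := integrable_of_nonneg_of_bddAbove hf hf0 hbdd
  have hbddA : BddAbove (f '' A) := hbdd.mono (image_subset_range f A)
  have hrange :
      BddAbove (range fun Q : ProbabilityMeasure Ω => postProb f (contam P Q ε) A) :=
    ⟨1, forall_mem_range.2 fun Q => postProb_le_one hf0 (hint _) A⟩
  have : Nonempty (ProbabilityMeasure Ω) := ⟨⟨P, inferInstance⟩⟩
  rw [upperPost]
  refine le_antisymm
    (ciSup_le fun Q => postProb_contam_le hf0 (hint P) (hint Q) hm hε0 hε1 hA hbddA) ?_
  rcases A.eq_empty_or_nonempty with rfl | hne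
  · simpa using Real.iSup_nonneg fun Q => postProb_nonneg hf0 _ _
  set g := fun t => ((1 - ε) * ∫ ψ in A, f ψ ∂P + ε * t) / ((1 - ε) * ∫ ψ, f ψ ∂P + ε * t)
  refine le_on_closure (f := g) (fun t ht => ?_) ?_ continuousOn_const
    (csSup_mem_closure (hne.image f) hbddA)
  · obtain ⟨ψ, hψ, rfl⟩ := ht
    have := le_ciSup hrange ⟨Measure.dirac ψ, inferInstance⟩
    rwa [ProbabilityMeasure.coe_mk, postProb_contam_dirac hf (hint P) hε0 hε1.le hA,
      indicator_of_mem hψ] at this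
  · exact (continuousOn_div_contam_denom hm hε0 hε1 (by fun_prop)).mono
      (closure_minimal (image_subset_iff.2 fun ψ _ => hf0 ψ) isClosed_Ici)

theorem lowerPost_eq (hf : Measurable f) (hf0 : ∀ ψ, 0 ≤ f ψ) (hbdd : BddAbove (range f))
    [IsProbabilityMeasure P] (hm : 0 < ∫ ψ, f ψ ∂P) (hε0 : 0 ≤ ε) (hε1 : ε < 1)
    (hA : MeasurableSet A) :
    lowerPost f P ε A = (1 - ε) * (∫ ψ in A, f ψ ∂P) /
        ((1 - ε) * ∫ ψ, f ψ ∂P + ε * sSup (f '' Aᶜ)) := by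
  have hint := integrable_of_nonneg_of_bddAbove hf hf0 hbdd
  have hbddAc : BddAbove (f '' Aᶜ) := hbdd.mono (image_subset_range f Aᶜ)
  have hrange :
      BddBelow (range fun Q : ProbabilityMeasure Ω => postProb f (contam P Q ε) A) :=
    ⟨0, forall_mem_range.2 fun Q => postProb_nonneg hf0 _ A⟩
  have : Nonempty (ProbabilityMeasure Ω) := ⟨⟨P, inferInstance⟩⟩
  rw [lowerPost]
  refine le_antisymm ?_
    (le_ciInf fun Q => le_postProb_contam hf0 (hint P) (hint Q) hm hε0 hε1 hA hbddAc)
  rcases Aᶜ.eq_empty_or_nonempty with hAc | hne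
  · obtain rfl : A = univ := compl_empty_iff.1 hAc
    rw [compl_univ, image_empty, Real.sSup_empty, mul_zero, add_zero, setIntegral_univ,
      div_self (mul_pos (sub_pos.2 hε1) hm).ne']
    exact ciInf_le_of_le hrange ⟨P, inferInstance⟩
      (postProb_le_one hf0 (hint (contam P P ε)) _)
  set g := fun t => (1 - ε) * (∫ ψ in A, f ψ ∂P) / ((1 - ε) * ∫ ψ, f ψ ∂P + ε * t)
  refine le_on_closure (g := g) (fun t ht => ?_) continuousOn_const ?_
    (csSup_mem_closure (hne.image f) hbddAc)
  · obtain ⟨ψ, hψ, rfl⟩ := ht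
    have := ciInf_le hrange ⟨Measure.dirac ψ, inferInstance⟩
    rwa [ProbabilityMeasure.coe_mk, postProb_contam_dirac hf (hint P) hε0 hε1.le hA,
      indicator_of_notMem hψ, mul_zero, add_zero] at this
  · exact (continuousOn_div_contam_denom hm hε0 hε1 continuous_const).mono
      (closure_minimal (image_subset_iff.2 fun ψ _ => hf0 ψ) isClosed_Ici)

end Contamination

/-- Huber's Lemma 1 (iii):
`δ(A) = Π(A|x) ε* (r(Aᶜ) − r(A)) / ((1 + ε* r(A))(1 + ε* r(Aᶜ))) + ε* r(A)/(1 + ε* r(A))`. -/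
theorem deltaPost_eq
    (f : Ω → ℝ) (hf : Measurable f) (hf0 : ∀ ψ, 0 ≤ f ψ)
    (C : ℝ) (hfC : ∀ ψ, f ψ ≤ C)
    (P : Measure Ω) [IsProbabilityMeasure P]
    (hm : 0 < ∫ ψ, f ψ ∂P)
    (ε : ℝ) (hε : ε ∈ Set.Ioo (0 : ℝ) 1)
    (A : Set Ω) (hA : MeasurableSet A) :
    deltaPost f P ε A =
      postProb f P A * (ε / (1 - ε)) * (rSup f P Aᶜ - rSup f P A) /
          ((1 + (ε / (1 - ε)) * rSup f P A) * (1 + (ε / (1 - ε)) * rSup f P Aᶜ)) +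
        (ε / (1 - ε)) * rSup f P A / (1 + (ε / (1 - ε)) * rSup f P A) := by
  obtain ⟨hε0, hε1⟩ := hε
  have hbdd : BddAbove (range f) := ⟨C, forall_mem_range.2 hfC⟩
  have hs := sSup_image_nonneg hf0 A
  have hs' := sSup_image_nonneg hf0 Aᶜ
  rw [deltaPost, upperPost_eq hf hf0 hbdd hm hε0.le hε1 hA,
    lowerPost_eq hf hf0 hbdd hm hε0.le hε1 hA, postProb, rSup, rSup]
  field_simp
  ring
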